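/- arXiv:1804.11267 — 2 statements merged into one kernel-verified Lean document; each statement's English description precedes it below -/
import Mathlib

section
/- Let 0 < δ < 1/(e−1). Then ∫_0^δ (log(1/u + 1))^{1/2} du ≤ 2 δ (log(1/δ + 1))^{1/2}. -/
/-!
With L = log (1/δ + 1), AM-GM gives √y ≤ (y + L) / (2√L) pointwise. The integral of
log (1/u + 1) = log (1 + u) - log u over (0, δ] is δ L + log (1 + δ) ≤ δ (L + 1), so the
integral of the square root is at most δ (2L + 1) / (2√L), which is ≤ 2δ√L once L ≥ 1/2;
the hypothesis on δ gives L ≥ 1.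
-/

open Real MeasureTheory intervalIntegral Set

theorem Real.sqrt_le_add_div_two_mul_sqrt {x c : ℝ} (hx : 0 ≤ x) (hc : 0 < c) :
    √x ≤ (x + c) / (2 * √c) := by
  rw [le_div_iff₀ (by positivity)]
  nlinarith [sq_nonneg (√x - √c), sq_sqrt hx, sq_sqrt hc.le]

theorem Real.sqrt_le_abs_add_one (x : ℝ) : √x ≤ |x| + 1 :=
  Real.sqrt_le_iff.mpr ⟨by positivity, by nlinarith [abs_nonneg x, le_abs_self x]⟩

theorem IntervalIntegrable.sqrt {μ : Measure ℝ} [IsLocallyFiniteMeasure μ] {f : ℝ → ℝ}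
    {a b : ℝ} (hf : IntervalIntegrable f μ a b) : IntervalIntegrable (fun x => √(f x)) μ a b := by
  refine (hf.norm.add (intervalIntegrable_const (c := 1))).mono_fun
    (continuous_sqrt.comp_aestronglyMeasurable hf.aestronglyMeasurable_restrict_uIoc)
    (ae_of_all _ fun x => ?_)
  simp only [norm_eq_abs, abs_of_nonneg (sqrt_nonneg _)]
  exact (sqrt_le_abs_add_one _).trans (le_abs_self _)

theorem intervalIntegral.integral_sqrt_le_add_div {f : ℝ → ℝ} {a b c : ℝ} (hab : a ≤ b)
    (hc : 0 < c) (hf : IntervalIntegrable f volume a b) (hf0 : ∀ x ∈ Icc a b, 0 ≤ f x) :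
    ∫ x in a..b, √(f x) ≤ ((∫ x in a..b, f x) + (b - a) * c) / (2 * √c) :=
  calc ∫ x in a..b, √(f x) ≤ ∫ x in a..b, (f x + c) / (2 * √c) :=
        integral_mono_on hab hf.sqrt ((hf.add intervalIntegrable_const).div_const _)
          fun x hx => sqrt_le_add_div_two_mul_sqrt (hf0 x hx) hc
    _ = ((∫ x in a..b, f x) + (b - a) * c) / (2 * √c) := by
        rw [integral_div, integral_add hf intervalIntegrable_const, integral_const, smul_eq_mul]

-- Valid for every `x`: at `x = 0` and `x = -1` both sides vanish through `log 0 = 0`.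
theorem Real.log_one_div_add_one (x : ℝ) : log (1 / x + 1) = log (1 + x) - log x := by
  rcases eq_or_ne x 0 with rfl | hx
  · simp
  rcases eq_or_ne (1 + x) 0 with h | h
  · rw [show x = -1 by linarith]; simp
  rw [← log_div h hx, add_div, div_self hx]

theorem intervalIntegrable_log_one_add (a b : ℝ) :
    IntervalIntegrable (fun x => log (1 + x)) volume a b := by
  simpa using (intervalIntegrable_log' (a := 1 + a) (b := 1 + b)).comp_add_left 1

theorem intervalIntegrable_log_one_div_add_one (a b : ℝ) :
    IntervalIntegrable (fun x => log (1 / x + 1)) volume a b := by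
  simp_rw [log_one_div_add_one]
  exact (intervalIntegrable_log_one_add a b).sub intervalIntegrable_log'

theorem integral_log_one_div_add_one (a b : ℝ) :
    ∫ x in a..b, log (1 / x + 1) =
      (1 + b) * log (1 + b) - b * log b - ((1 + a) * log (1 + a) - a * log a) := by
  simp_rw [log_one_div_add_one]
  rw [integral_sub (intervalIntegrable_log_one_add a b) intervalIntegrable_log',
    integral_comp_add_left log, integral_log, integral_log]
  ring

theorem integral_log_one_div_add_one_le {δ : ℝ} (hδ : -1 < δ) :
    ∫ x in (0 : ℝ)..δ, log (1 / x + 1) ≤ δ * (log (1 / δ + 1) + 1) := by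
  have := log_le_sub_one_of_pos (show 0 < 1 + δ by linarith)
  rw [integral_log_one_div_add_one, log_one_div_add_one δ]
  simp only [add_zero, log_one, mul_zero, zero_mul, sub_zero]
  nlinarith

theorem one_le_log_one_div_add_one {δ : ℝ} (hδ0 : 0 < δ) (hδ : δ ≤ 1 / (exp 1 - 1)) :
    1 ≤ log (1 / δ + 1) := by
  have he : 0 < exp 1 - 1 := by linarith [add_one_lt_exp one_ne_zero]
  rw [le_log_iff_exp_le (by positivity)]
  have := one_div_le_one_div_of_le hδ0 hδ
  rw [one_div_one_div] at this
  linarith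

theorem integral_sqrt_log_le {δ : ℝ} (hδ0 : 0 < δ) (hδ : δ < 1 / (Real.exp 1 - 1)) :
    ∫ u in (0:ℝ)..δ, Real.sqrt (Real.log (1 / u + 1))
      ≤ 2 * δ * Real.sqrt (Real.log (1 / δ + 1)) := by
  set L := log (1 / δ + 1)
  have hL : 1 ≤ L := one_le_log_one_div_add_one hδ0 hδ.le
  have hf0 : ∀ u ∈ Icc 0 δ, 0 ≤ log (1 / u + 1) := fun u hu =>
    log_nonneg (le_add_of_nonneg_left (one_div_nonneg.mpr hu.1))
  calc ∫ u in (0:ℝ)..δ, √(log (1 / u + 1))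
      ≤ ((∫ u in (0:ℝ)..δ, log (1 / u + 1)) + (δ - 0) * L) / (2 * √L) :=
        integral_sqrt_le_add_div hδ0.le (by linarith)
          (intervalIntegrable_log_one_div_add_one 0 δ) hf0
    _ ≤ (δ * (L + 1) + δ * L) / (2 * √L) := by
        gcongr
        · exact integral_log_one_div_add_one_le (by linarith)
        · simp
    _ ≤ 2 * δ * √L := by
        rw [div_le_iff₀ (by positivity)]
        nlinarith [mul_self_sqrt (show 0 ≤ L by linarith)]
end

section
/- Let v₀(x) = (1/x) e^{−α₀x − θ₀(x)} and v(x) = (1/x) e^{−αx − θ(x)} for x > 0, where α₀, α ≥ α_min > 0, and θ₀, θ are bounded measurable functions supported on a compact interval [b_low, b_up] with 0 < b_low < b_up < ∞ and ‖θ₀‖_∞, ‖θ‖_∞ ≤ θ_bar. Then there exists a constant C (depending only on α_min, θ_bar, b_low, b_up and an upper bound on α₀, α) such that ∫_0^∞ |v(x) − v₀(x)| dx ≤ C(|α − α₀| + ‖θ − θ₀‖_∞). -/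
open Real MeasureTheory Set

/-!
On `(0, ∞)` both exponents are at most `-α_min x + θ̄`, so the Lipschitz bound for `exp`
below that level gives
`|v(x) - v₀(x)| ≤ e^{θ̄} (|α - α₀| e^{-α_min x} + |θ(x) - θ₀(x)| / x)`.
The first term integrates to `e^{θ̄} |α - α₀| / α_min`; the second vanishes off `[b_low, b_up]`,
where `1 / x ≤ 1 / b_low`, so it integrates to at most `e^{θ̄} M (b_up - b_low) / b_low`.
-/

lemma abs_exp_sub_exp_le_exp_mul {a b c : ℝ} (ha : a ≤ c) (hb : b ≤ c) :
    |exp a - exp b| ≤ exp c * |a - b| := by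
  wlog hba : b ≤ a generalizing a b
  · rw [abs_sub_comm, abs_sub_comm a b]
    exact this hb ha (le_of_not_ge hba)
  have hexp_diff : exp a - exp b = exp a * (1 - exp (b - a)) := by
    rw [mul_sub, mul_one, ← exp_add, add_sub_cancel]
  have hone_sub : 1 - exp (b - a) ≤ a - b := by linarith [add_one_le_exp (b - a)]
  rw [abs_of_nonneg (sub_nonneg.2 (exp_le_exp.2 hba)), abs_of_nonneg (sub_nonneg.2 hba), hexp_diff]
  calc exp a * (1 - exp (b - a)) ≤ exp a * (a - b) := by gcongr
    _ ≤ exp c * (a - b) := by gcongr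

lemma abs_inv_mul_exp_sub_inv_mul_exp_le {x a a₀ t t₀ amin s : ℝ} (hx : 0 < x) (hamin : 0 ≤ amin)
    (ha : amin ≤ a) (ha₀ : amin ≤ a₀) (ht : -s ≤ t) (ht₀ : -s ≤ t₀) :
    |1 / x * exp (-a * x - t) - 1 / x * exp (-a₀ * x - t₀)|
      ≤ exp s * (|a - a₀| * exp (-amin * x) + |t - t₀| / x) := by
  have hexponent : ∀ a' t', amin ≤ a' → -s ≤ t' → -a' * x - t' ≤ -amin * x + s := by
    intro a' t' ha' ht'
    nlinarith
  have hdiff : |(-a * x - t) - (-a₀ * x - t₀)| ≤ |a - a₀| * x + |t - t₀| := by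
    calc |(-a * x - t) - (-a₀ * x - t₀)| = |-((a - a₀) * x) - (t - t₀)| := by ring_nf
      _ ≤ |(a - a₀) * x| + |t - t₀| := by rw [← abs_neg ((a - a₀) * x)]; exact abs_sub _ _
      _ = |a - a₀| * x + |t - t₀| := by rw [abs_mul, abs_of_pos hx]
  have hdecay : exp (-amin * x) ≤ 1 := exp_le_one_iff.2 (by nlinarith)
  rw [← mul_sub, abs_mul, abs_of_pos (one_div_pos.2 hx)]
  calc 1 / x * |exp (-a * x - t) - exp (-a₀ * x - t₀)|
      ≤ 1 / x * (exp (-amin * x + s) * (|a - a₀| * x + |t - t₀|)) := by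
        gcongr
        exact (abs_exp_sub_exp_le_exp_mul (hexponent a t ha ht) (hexponent a₀ t₀ ha₀ ht₀)).trans
          (mul_le_mul_of_nonneg_left hdiff (exp_pos _).le)
    _ = exp s * (|a - a₀| * exp (-amin * x) + exp (-amin * x) * (|t - t₀| / x)) := by
        rw [exp_add]; field_simp
    _ ≤ exp s * (|a - a₀| * exp (-amin * x) + |t - t₀| / x) := by
        gcongr
        exact mul_le_of_le_one_left (by positivity) hdecay

lemma integral_exp_neg_mul_Ioi_zero {b : ℝ} (hb : 0 < b) :
    ∫ x in Ioi (0 : ℝ), exp (-b * x) = 1 / b := by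
  rw [integral_exp_mul_Ioi (neg_lt_zero.2 hb), mul_zero, exp_zero, neg_div_neg_eq]

lemma abs_div_le_indicator_Icc {f : ℝ → ℝ} {l u M : ℝ} (hl : 0 < l)
    (hf : ∀ x, x ∉ Icc l u → f x = 0) (hM : ∀ x, |f x| ≤ M) (x : ℝ) :
    |f x| / x ≤ (Icc l u).indicator (fun _ => M / l) x := by
  by_cases hx : x ∈ Icc l u
  · rw [indicator_of_mem hx]
    exact div_le_div₀ ((abs_nonneg _).trans (hM x)) (hM x) hl hx.1
  · rw [indicator_of_notMem hx, hf x hx, abs_zero, zero_div]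

lemma setIntegral_Ioi_zero_indicator_Icc_const {l u : ℝ} (hl : 0 < l) (hlu : l ≤ u) (c : ℝ) :
    ∫ x in Ioi (0 : ℝ), (Icc l u).indicator (fun _ => c) x = (u - l) * c := by
  have hIcc : Ioi 0 ∩ Icc l u = Icc l u := inter_eq_right.2 fun _ hy => hl.trans_le hy.1
  rw [setIntegral_indicator measurableSet_Icc, hIcc, setIntegral_const,
    volume_real_Icc_of_le hlu, smul_eq_mul]

lemma integrable_indicator_Icc_const (l u c : ℝ) :
    Integrable ((Icc l u).indicator (fun _ => c)) :=
  (integrable_indicator_iff measurableSet_Icc).2 (integrableOn_const measure_Icc_lt_top.ne)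

/-- Times `e^{θ̄}`, this majorizes `|v - v₀|` on `(0, ∞)` when `D = |α - α₀|`, `b = α_min`, and
`M` bounds `|θ - θ₀|`, which vanishes off `[l, u]`. -/
noncomputable def levyMajorant (D b M l u x : ℝ) : ℝ :=
  D * exp (-b * x) + (Icc l u).indicator (fun _ => M / l) x

section levyMajorant

variable {D b M l u : ℝ}

lemma integrableOn_levyMajorant (hb : 0 < b) :
    IntegrableOn (levyMajorant D b M l u) (Ioi 0) :=
  ((exp_neg_integrableOn_Ioi 0 hb).const_mul D).add
    (integrable_indicator_Icc_const l u _).integrableOn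

lemma setIntegral_levyMajorant (hb : 0 < b) (hl : 0 < l) (hlu : l ≤ u) :
    ∫ x in Ioi (0 : ℝ), levyMajorant D b M l u x = D * (1 / b) + M * ((u - l) / l) := by
  unfold levyMajorant
  rw [integral_add ((exp_neg_integrableOn_Ioi 0 hb).const_mul D)
      (integrable_indicator_Icc_const l u _).integrableOn, integral_const_mul,
    integral_exp_neg_mul_Ioi_zero hb, setIntegral_Ioi_zero_indicator_Icc_const hl hlu]
  ring

lemma abs_inv_mul_exp_sub_le_levyMajorant {x a a₀ s : ℝ} {θ θ₀ : ℝ → ℝ} (hx : 0 < x)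
    (hb : 0 ≤ b) (hl : 0 < l) (ha : b ≤ a) (ha₀ : b ≤ a₀)
    (hθ : ∀ y, |θ y| ≤ s) (hθ₀ : ∀ y, |θ₀ y| ≤ s)
    (hθ_supp : ∀ y, y ∉ Icc l u → θ y = 0) (hθ₀_supp : ∀ y, y ∉ Icc l u → θ₀ y = 0)
    (hM : ∀ y, |θ y - θ₀ y| ≤ M) :
    |1 / x * exp (-a * x - θ x) - 1 / x * exp (-a₀ * x - θ₀ x)|
      ≤ exp s * levyMajorant |a - a₀| b M l u x := by
  have hdiff_supp : ∀ y, y ∉ Icc l u → θ y - θ₀ y = 0 := fun y hy => by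
    rw [hθ_supp y hy, hθ₀_supp y hy, sub_zero]
  refine (abs_inv_mul_exp_sub_inv_mul_exp_le hx hb ha ha₀
    (neg_le_of_abs_le (hθ x)) (neg_le_of_abs_le (hθ₀ x))).trans ?_
  rw [levyMajorant]
  gcongr
  exact abs_div_le_indicator_Icc hl hdiff_supp hM x

end levyMajorant

theorem levy_density_L1_lipschitz_general
    (αmin αmax θbar blow bup : ℝ) (hαmin : 0 < αmin)
    (hblow : 0 < blow) (hbb : blow < bup) :
    ∃ C : ℝ, 0 < C ∧
      ∀ (α α₀ : ℝ) (θ θ₀ : ℝ → ℝ),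
        α ∈ Set.Icc αmin αmax → α₀ ∈ Set.Icc αmin αmax →
        Measurable θ → Measurable θ₀ →
        (∀ x, |θ x| ≤ θbar) → (∀ x, |θ₀ x| ≤ θbar) →
        (∀ x, x ∉ Set.Icc blow bup → θ x = 0) →
        (∀ x, x ∉ Set.Icc blow bup → θ₀ x = 0) →
        ∀ M : ℝ, (∀ x, |θ x - θ₀ x| ≤ M) →
          ∫ x in Set.Ioi (0:ℝ),
              |(1 / x) * Real.exp (-α * x - θ x) - (1 / x) * Real.exp (-α₀ * x - θ₀ x)|
            ≤ C * (|α - α₀| + M) := by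
  have hK₁ : 0 ≤ 1 / αmin := by positivity
  have hK₂ : 0 ≤ (bup - blow) / blow := div_nonneg (by linarith) hblow.le
  refine ⟨exp θbar * (1 / αmin + (bup - blow) / blow), by positivity, ?_⟩
  intro α α₀ θ θ₀ hα hα₀ _ _ hθ hθ₀ hθ_supp hθ₀_supp M hM
  have hM₀ : 0 ≤ M := (abs_nonneg _).trans (hM 0)
  have hbound : ∀ x ∈ Ioi (0 : ℝ),
      |1 / x * exp (-α * x - θ x) - 1 / x * exp (-α₀ * x - θ₀ x)|
        ≤ exp θbar * levyMajorant |α - α₀| αmin M blow bup x := fun x hx =>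
    abs_inv_mul_exp_sub_le_levyMajorant hx hαmin.le hblow hα.1 hα₀.1 hθ hθ₀ hθ_supp hθ₀_supp hM
  calc _ ≤ ∫ x in Ioi (0 : ℝ), exp θbar * levyMajorant |α - α₀| αmin M blow bup x :=
        integral_mono_of_nonneg (ae_of_all _ fun x => abs_nonneg _)
          ((integrableOn_levyMajorant hαmin).const_mul _)
          ((ae_restrict_iff' measurableSet_Ioi).2 (ae_of_all _ hbound))
    _ = exp θbar * (|α - α₀| * (1 / αmin) + M * ((bup - blow) / blow)) := by
        rw [integral_const_mul, setIntegral_levyMajorant hαmin hblow hbb.le]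
    _ ≤ exp θbar * (1 / αmin + (bup - blow) / blow) * (|α - α₀| + M) := by
        rw [mul_assoc]
        gcongr
        nlinarith [mul_nonneg (abs_nonneg (α - α₀)) hK₂, mul_nonneg hM₀ hK₁]

/-- L¹-Lipschitz dependence of the Lévy density `v(x) = x⁻¹ e^{−αx−θ(x)}` on the
parameters `(α, θ)`: there is a constant `C`, depending only on the bounds
`α_min, α_max, θ_bar, b_low, b_up`, such that
`∫₀^∞ |v − v₀| ≤ C (|α − α₀| + ‖θ − θ₀‖_∞)`. -/
theorem levy_density_L1_lipschitz
    (αmin αmax θbar blow bup : ℝ) (hαmin : 0 < αmin) (hαminmax : αmin ≤ αmax)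
    (hblow : 0 < blow) (hbb : blow < bup) (hθbar : 0 ≤ θbar) :
    ∃ C : ℝ, 0 < C ∧
      ∀ (α α₀ : ℝ) (θ θ₀ : ℝ → ℝ),
        α ∈ Set.Icc αmin αmax → α₀ ∈ Set.Icc αmin αmax →
        Measurable θ → Measurable θ₀ →
        (∀ x, |θ x| ≤ θbar) → (∀ x, |θ₀ x| ≤ θbar) →
        (∀ x, x ∉ Set.Icc blow bup → θ x = 0) →
        (∀ x, x ∉ Set.Icc blow bup → θ₀ x = 0) →
        ∀ M : ℝ, (∀ x, |θ x - θ₀ x| ≤ M) →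
          ∫ x in Set.Ioi (0:ℝ),
              |(1 / x) * Real.exp (-α * x - θ x) - (1 / x) * Real.exp (-α₀ * x - θ₀ x)|
            ≤ C * (|α - α₀| + M) :=
  levy_density_L1_lipschitz_general αmin αmax θbar blow bup hαmin hblow hbb
end
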